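/- Define s : (0,∞) → ℝ by s(x) = e^{1/x} · ∫_0^x e^{-1/t}/t dt (the integrand extended by 0 at t = 0). Then s is differentiable on (0,∞) and satisfies the differential equation x² · s′(x) + s(x) = x for all x > 0. -/
import Mathlib

open MeasureTheory intervalIntegral

lemma euler_f_bound : ∀ t : ℝ, 0 < t → |Real.exp (-1 / t) / t| ≤ 1 := by
  intro t ht
  have h1 : (0:ℝ) ≤ Real.exp (-1 / t) / t :=
    div_nonneg (Real.exp_pos _).le ht.le
  rw [abs_of_nonneg h1, div_le_one ht]
  have hu : 1 / t ≤ Real.exp (1 / t) := by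
    have := Real.add_one_le_exp (1 / t); linarith
  have hu' : 1 ≤ Real.exp (1 / t) * t := (div_le_iff₀ ht).mp hu
  have h2 : Real.exp (-1 / t) * Real.exp (1 / t) = 1 := by
    rw [← Real.exp_add]; ring_nf; exact Real.exp_zero
  nlinarith [(Real.exp_pos (-1 / t)).le]

lemma euler_f_measurable : Measurable (fun t : ℝ => Real.exp (-1 / t) / t) := by
  fun_prop

lemma euler_f_intervalIntegrable {x : ℝ} (hx : 0 < x) :
    IntervalIntegrable (fun t => Real.exp (-1 / t) / t) volume 0 x := by
  rw [intervalIntegrable_iff_integrableOn_Ioc_of_le hx.le]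
  apply Measure.integrableOn_of_bounded (M := 1) (measure_Ioc_lt_top).ne
    euler_f_measurable.aestronglyMeasurable
  filter_upwards [ae_restrict_mem measurableSet_Ioc] with t ht
  exact euler_f_bound t ht.1

theorem euler_integral_ODE :
    ∀ x : ℝ, 0 < x → ∃ d : ℝ,
      HasDerivAt (fun y : ℝ => Real.exp (1 / y) * ∫ t in Set.Ioo (0 : ℝ) y, Real.exp (-1 / t) / t)
        d x ∧
      x ^ 2 * d + Real.exp (1 / x) * (∫ t in Set.Ioo (0 : ℝ) x, Real.exp (-1 / t) / t) = x := by
  intro x hx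
  set f : ℝ → ℝ := fun t => Real.exp (-1 / t) / t with hf
  have hcont : ContinuousAt f x := by
    apply ContinuousAt.div
    · exact (Real.continuous_exp.continuousAt).comp
        ((continuousAt_const.div continuousAt_id hx.ne'))
    · exact continuousAt_id
    · exact hx.ne'
  have hG : HasDerivAt (fun y => ∫ t in (0:ℝ)..y, f t) (f x) x :=
    intervalIntegral.integral_hasDerivAt_right (euler_f_intervalIntegrable hx)
      (euler_f_measurable.stronglyMeasurable.stronglyMeasurableAtFilter) hcont
  have heq : (fun y => ∫ t in (0:ℝ)..y, f t) =ᶠ[nhds x]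
      (fun y => ∫ t in Set.Ioo (0:ℝ) y, f t) := by
    filter_upwards [eventually_gt_nhds hx] with y hy
    rw [intervalIntegral.integral_of_le hy.le, MeasureTheory.integral_Ioc_eq_integral_Ioo]
  have hF : HasDerivAt (fun y => ∫ t in Set.Ioo (0:ℝ) y, f t) (f x) x :=
    hG.congr_of_eventuallyEq heq.symm
  have hinv : HasDerivAt (fun y : ℝ => 1 / y) (-(x^2)⁻¹) x := by
    simpa only [one_div] using hasDerivAt_inv hx.ne'
  have hE : HasDerivAt (fun y : ℝ => Real.exp (1 / y))
      (Real.exp (1 / x) * (-(x^2)⁻¹)) x := hinv.exp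
  set F := ∫ t in Set.Ioo (0:ℝ) x, f t with hFdef
  refine ⟨Real.exp (1 / x) * (-(x^2)⁻¹) * F + Real.exp (1 / x) * f x, hE.mul hF, ?_⟩
  have hcancel : Real.exp (1 / x) * Real.exp (-1 / x) = 1 := by
    rw [← Real.exp_add]; ring_nf; exact Real.exp_zero
  have h1 : x ^ 2 * (x ^ 2)⁻¹ = 1 := mul_inv_cancel₀ (pow_ne_zero 2 hx.ne')
  have h2 : x * x⁻¹ = 1 := mul_inv_cancel₀ hx.ne'
  have hfx : f x = Real.exp (-1 / x) / x := rfl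
  rw [hfx]
  linear_combination (-(Real.exp (1 / x) * F)) * h1
    + (x * Real.exp (1 / x) * Real.exp (-1 / x)) * h2 + x * hcancel
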